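/- Let α₁,…,α₆ be an orthogonal basis of ℝ⁶ with each (αᵢ,αᵢ) = 3, and let L be the lattice spanned by α₁,…,α₆ and h := (1/3)(α₁+⋯+α₆). Then the only vectors of norm 2 in L are ±h. -/
import Mathlib


open scoped RealInnerProductSpace

lemma key6 (c : Fin 6 → ℤ) (m : ℤ) (hc : ∀ i, c i % 3 = m % 3)
    (hs : ∑ i, (c i)^2 = 6) : (∀ i, c i = 1) ∨ (∀ i, c i = -1) := by
  have hb : ∀ i, -2 ≤ c i ∧ c i ≤ 2 := by
    intro i
    have h1 : (c i)^2 ≤ 6 := by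
      have h2 := Finset.single_le_sum (f := fun i => (c i)^2) (fun i _ => sq_nonneg _)
        (Finset.mem_univ i)
      linarith
    constructor <;> nlinarith
  have hm : m % 3 = 0 ∨ m % 3 = 1 ∨ m % 3 = 2 := by omega
  rcases hm with hm | hm | hm
  · exfalso
    have : ∀ i, c i = 0 := fun i => by have := hc i; have := hb i; omega
    simp [this] at hs
  · left
    have h1 : ∀ i, c i = 1 ∨ c i = -2 := by
      intro i; have := hc i; have := hb i; omega
    have h2 : ∀ i, 1 ≤ (c i)^2 := by
      intro i; rcases h1 i with h | h <;> simp [h]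
    have hz : ∑ i, ((c i)^2 - 1) = 0 := by
      rw [Finset.sum_sub_distrib]; simp [hs]
    have h3 := (Finset.sum_eq_zero_iff_of_nonneg (fun i _ => by linarith [h2 i])).mp hz
    intro i
    have h4 := h3 i (Finset.mem_univ i)
    rcases h1 i with h | h
    · exact h
    · rw [h] at h4; norm_num at h4
  · right
    have h1 : ∀ i, c i = -1 ∨ c i = 2 := by
      intro i; have := hc i; have := hb i; omega
    have h2 : ∀ i, 1 ≤ (c i)^2 := by
      intro i; rcases h1 i with h | h <;> simp [h]
    have hz : ∑ i, ((c i)^2 - 1) = 0 := by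
      rw [Finset.sum_sub_distrib]; simp [hs]
    have h3 := (Finset.sum_eq_zero_iff_of_nonneg (fun i _ => by linarith [h2 i])).mp hz
    intro i
    have h4 := h3 i (Finset.mem_univ i)
    rcases h1 i with h | h
    · exact h
    · rw [h] at h4; norm_num at h4

lemma inner_comb6 {V : Type*} [NormedAddCommGroup V] [InnerProductSpace ℝ V]
    (α : Fin 6 → V) (horth : ∀ i j, ⟪α i, α j⟫ = if i = j then 3 else 0)
    (d e : Fin 6 → ℝ) :
    ⟪∑ i, d i • α i, ∑ i, e i • α i⟫ = 3 * ∑ i, d i * e i := by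
  simp only [inner_sum, sum_inner, real_inner_smul_left, real_inner_smul_right, horth,
    mul_ite, mul_zero, Finset.sum_ite_eq', Finset.mem_univ, if_true, Finset.mul_sum]
  exact Finset.sum_congr rfl fun i _ => by ring

/-- With α₁,…,α₆ orthogonal of norm 3 and L the ℤ-span of the αᵢ
and h := (1/3)(α₁+⋯+α₆), the only vectors of norm 2 in L are ±h. -/
theorem stmt_6 {V : Type*} [NormedAddCommGroup V] [InnerProductSpace ℝ V]
    (hdim : Module.finrank ℝ V = 6)
    (α : Fin 6 → V)
    (horth : ∀ i j, ⟪α i, α j⟫ = if i = j then 3 else 0)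
    (h : V) (hdef : h = (1/3 : ℝ) • ∑ i, α i)
    (L : Submodule ℤ V)
    (hL : L = Submodule.span ℤ (Set.range α ∪ {h})) :
    ∀ v ∈ L, (⟪v, v⟫ = 2 ↔ v = h ∨ v = -h) := by
  have hh2 : h = ∑ i, (fun _ : Fin 6 => (1/3 : ℝ)) i • α i := by
    rw [hdef, Finset.smul_sum]
  have hhh : ⟪h, h⟫ = 2 := by
    rw [hh2, inner_comb6 α horth]
    simp [Finset.sum_const, Finset.card_univ]
    norm_num
  intro v hv
  -- decompose v
  rw [hL, Set.union_singleton, ← Fin.range_cons h α, Submodule.mem_span_range_iff_exists_fun] at hv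
  obtain ⟨c, hc⟩ := hv
  have hvd : v = ∑ i : Fin 6, ((((3 * c i.succ + c 0 : ℤ)) : ℝ) / 3) • α i := by
    rw [← hc, Fin.sum_univ_succ]
    simp only [Fin.cons_zero, Fin.cons_succ, hdef]
    simp only [← Int.cast_smul_eq_zsmul ℝ, smul_smul, Finset.smul_sum,
      ← Finset.sum_add_distrib, ← add_smul]
    refine Finset.sum_congr rfl fun i _ => ?_
    congr 1
    push_cast
    ring
  constructor
  · intro h2
    rw [hvd, inner_comb6 α horth] at h2
    have h6 : ∑ i : Fin 6, (((3 * c i.succ + c 0 : ℤ)) : ℝ)^2 = 6 := by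
      have e1 : ∑ i : Fin 6, ((((3 * c i.succ + c 0 : ℤ)) : ℝ) / 3) * ((((3 * c i.succ + c 0 : ℤ)) : ℝ) / 3)
          = (∑ i : Fin 6, (((3 * c i.succ + c 0 : ℤ)) : ℝ)^2) / 9 := by
        rw [Finset.sum_div]
        exact Finset.sum_congr rfl fun i _ => by ring
      rw [e1] at h2
      linarith
    have h6' : ∑ i : Fin 6, (3 * c i.succ + c 0)^2 = (6 : ℤ) := by
      exact_mod_cast h6
    have hcong : ∀ i : Fin 6, (3 * c i.succ + c 0) % 3 = c 0 % 3 := fun i => by omega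
    rcases key6 (fun i => 3 * c i.succ + c 0) (c 0) hcong h6' with hall | hall
    · left
      rw [hvd, hh2]
      refine Finset.sum_congr rfl fun i _ => ?_
      rw [hall i]
      norm_num
    · right
      rw [hvd, hh2, ← Finset.sum_neg_distrib]
      refine Finset.sum_congr rfl fun i _ => ?_
      rw [hall i, ← neg_smul]
      norm_num
  · intro h2
    rcases h2 with h2 | h2 <;> rw [h2]
    · exact hhh
    · rw [inner_neg_neg]; exact hhh
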